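/- Consider instances in which each job j has at most one task per machine, located on machines i ∈ M_j, with size a_{ij} ≤ m_i, processing time p_{ij} > 0, and volume v_{ij} = a_{ij} p_{ij}. Let (C̃_j, δ_{jj'}) be any feasible solution of (LP3), with jobs indexed so that C̃_1 ≤ C̃_2 ≤ … ≤ C̃_N. Then there exists a valid preemptive schedule (each task processed on its designated machine) whose job completion times satisfy C_j ≤ 4·C̃_j for every job j. In particular, Σ_j w_j C_j ≤ 4 Σ_j w_j C̃_j, and since the optimal value of (LP3) is at most OPT, SynchPack-3 is a 4-approximation algorithm for parallel-task job scheduling with packing and single-machine placement constraints. -/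
import Mathlib

set_option maxHeartbeats 2000000

open Finset
open scoped Classical

namespace SP3

variable {N : ℕ}

noncomputable def loadA (A : Fin N → ℝ) (c : ℝ) (r : Fin N → ℕ) : ℕ → ℝ
  | 0 => 0
  | k + 1 => loadA A c r k +
      (if h : k < N then
        (if 0 < r ⟨k, h⟩ ∧ loadA A c r k + A ⟨k, h⟩ ≤ c then A ⟨k, h⟩ else 0)
       else 0)

def runsP (A : Fin N → ℝ) (c : ℝ) (r : Fin N → ℕ) (x : Fin N) : Prop :=
  0 < r x ∧ loadA A c r x.1 + A x ≤ c

noncomputable def RemS (A : Fin N → ℝ) (c : ℝ) (P : Fin N → ℕ) : ℕ → Fin N → ℕ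
  | 0 => P
  | t + 1 => fun x =>
      RemS A c P t x - (if runsP A c (RemS A c P t) x then 1 else 0)

variable {A : Fin N → ℝ} {c : ℝ} {r : Fin N → ℕ} {P : Fin N → ℕ}

lemma loadA_succ_lt {k : ℕ} (h : k < N) :
    loadA A c r (k + 1) = loadA A c r k +
      (if runsP A c r ⟨k, h⟩ then A ⟨k, h⟩ else 0) := by
  rw [loadA, dif_pos h]
  congr 1
  apply if_congr _ rfl rfl
  simp [runsP]

lemma loadA_succ_ge {k : ℕ} (h : ¬ k < N) :
    loadA A c r (k + 1) = loadA A c r k := by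
  rw [loadA, dif_neg h, add_zero]

lemma loadA_eq_sum (k : ℕ) :
    loadA A c r k =
      ∑ x ∈ univ.filter (fun x : Fin N => x.1 < k ∧ runsP A c r x), A x := by
  induction k with
  | zero => simp [loadA]
  | succ k ih =>
    by_cases h : k < N
    · rw [loadA_succ_lt h, ih]
      by_cases hr : runsP A c r ⟨k, h⟩
      · rw [if_pos hr]
        have hset : univ.filter (fun x : Fin N => x.1 < k + 1 ∧ runsP A c r x)
            = insert ⟨k, h⟩ (univ.filter (fun x : Fin N => x.1 < k ∧ runsP A c r x)) := by
          ext x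
          simp only [mem_filter, mem_univ, true_and, mem_insert]
          constructor
          · rintro ⟨hlt, hx⟩
            rcases Nat.lt_succ_iff_lt_or_eq.mp hlt with h' | h'
            · exact Or.inr ⟨h', hx⟩
            · exact Or.inl (Fin.ext h')
          · rintro (rfl | ⟨h', hx⟩)
            · exact ⟨Nat.lt_succ_self _, hr⟩
            · exact ⟨Nat.lt_succ_of_lt h', hx⟩
        rw [hset, Finset.sum_insert (by simp)]
        ring
      · rw [if_neg hr, add_zero]
        congr 1
        ext x
        simp only [mem_filter, mem_univ, true_and]
        constructor
        · rintro ⟨hlt, hx⟩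
          exact ⟨Nat.lt_succ_of_lt hlt, hx⟩
        · rintro ⟨hlt, hx⟩
          refine ⟨?_, hx⟩
          rcases Nat.lt_succ_iff_lt_or_eq.mp hlt with h' | h'
          · exact h'
          · exact absurd hx (by rw [show x = ⟨k, h⟩ from Fin.ext h']; exact hr)
    · rw [loadA_succ_ge h, ih]
      congr 1
      ext x
      simp only [mem_filter, mem_univ, true_and]
      have hxk : x.1 < k := lt_of_lt_of_le x.2 (Nat.le_of_not_lt h)
      constructor
      · rintro ⟨_, hx⟩; exact ⟨Nat.lt_succ_of_lt hxk, hx⟩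
      · rintro ⟨_, hx⟩; exact ⟨hxk, hx⟩

lemma loadA_nonneg (hA : ∀ x, 0 ≤ A x) (k : ℕ) : 0 ≤ loadA A c r k := by
  rw [loadA_eq_sum]
  exact Finset.sum_nonneg fun x _ => hA x

lemma loadA_mono (hA : ∀ x, 0 ≤ A x) {k m : ℕ} (hkm : k ≤ m) :
    loadA A c r k ≤ loadA A c r m := by
  rw [loadA_eq_sum, loadA_eq_sum]
  apply Finset.sum_le_sum_of_subset_of_nonneg
  · intro x hx
    simp only [mem_filter, mem_univ, true_and] at hx ⊢
    exact ⟨lt_of_lt_of_le hx.1 hkm, hx.2⟩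
  · intro x _ _; exact hA x

lemma loadA_le (hc : 0 ≤ c) (k : ℕ) : loadA A c r k ≤ c := by
  induction k with
  | zero => simpa [loadA] using hc
  | succ k ih =>
    by_cases h : k < N
    · rw [loadA_succ_lt h]
      by_cases hr : runsP A c r ⟨k, h⟩
      · rw [if_pos hr]; exact hr.2
      · rw [if_neg hr, add_zero]; exact ih
    · rw [loadA_succ_ge h]; exact ih

lemma sum_ite_runs :
    ∑ x : Fin N, (if runsP A c r x then A x else 0) = loadA A c r N := by
  rw [loadA_eq_sum, Finset.sum_filter]
  apply Finset.sum_congr rfl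
  intro x _
  have : x.1 < N := x.2
  simp [this]

lemma RemS_succ_add (t : ℕ) (x : Fin N) :
    RemS A c P (t + 1) x
      + (if runsP A c (RemS A c P t) x then 1 else 0) = RemS A c P t x := by
  by_cases hr : runsP A c (RemS A c P t) x
  · have h1 : RemS A c P (t+1) x = RemS A c P t x - 1 := by
      rw [RemS]; simp [hr]
    rw [h1, if_pos hr]
    exact Nat.sub_add_cancel hr.1
  · have h1 : RemS A c P (t+1) x = RemS A c P t x := by
      rw [RemS]; simp [hr]
    rw [h1, if_neg hr]
    omega

lemma RemS_succ_le (t : ℕ) (x : Fin N) :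
    RemS A c P (t + 1) x ≤ RemS A c P t x := by
  have h1 : RemS A c P (t+1) x = RemS A c P t x - (if runsP A c (RemS A c P t) x then 1 else 0) := by
    rw [RemS]
  rw [h1]; exact Nat.sub_le _ _

lemma RemS_antitone {s t : ℕ} (hst : s ≤ t) (x : Fin N) :
    RemS A c P t x ≤ RemS A c P s x := by
  exact antitone_nat_of_succ_le (f := fun n => RemS A c P n x)
    (fun n => RemS_succ_le n x) hst

lemma RemS_le_P (t : ℕ) (x : Fin N) : RemS A c P t x ≤ P x :=
  RemS_antitone (Nat.zero_le t) x

lemma rem_add_count (t : ℕ) (x : Fin N) :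
    RemS A c P t x
      + ∑ s ∈ Finset.range t, (if runsP A c (RemS A c P s) x then 1 else 0)
      = P x := by
  induction t with
  | zero => simp [RemS]
  | succ t ih =>
    rw [Finset.sum_range_succ, ← ih, ← RemS_succ_add t x]
    ring

lemma count_le (t : ℕ) (x : Fin N) :
    ∑ s ∈ Finset.range t, (if runsP A c (RemS A c P s) x then 1 else 0) ≤ P x := by
  have := rem_add_count (A := A) (c := c) (P := P) t x
  omega

lemma exists_runs (hAc : ∀ x, 0 < P x → A x ≤ c) {t : ℕ} {x₀ : Fin N}
    (h : 0 < RemS A c P t x₀) : ∃ y, runsP A c (RemS A c P t) y := by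
  set r := RemS A c P t with hr
  set Sa : Finset (Fin N) := univ.filter (fun y => 0 < r y) with hSa
  have hne : Sa.Nonempty := ⟨x₀, by simp [hSa, h]⟩
  set y := Sa.min' hne with hy
  have hymem : y ∈ Sa := Finset.min'_mem _ _
  have hypos : 0 < r y := by simpa [hSa] using hymem
  refine ⟨y, hypos, ?_⟩
  have hload : loadA A c r y.1 = 0 := by
    rw [loadA_eq_sum]
    apply Finset.sum_eq_zero
    intro x hx
    simp only [mem_filter, mem_univ, true_and] at hx
    exfalso
    have hxSa : x ∈ Sa := by simp [hSa, hx.2.1]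
    have := Finset.min'_le Sa x hxSa
    rw [← hy] at this
    exact absurd hx.1 (not_lt.mpr this)
  rw [hload, zero_add]
  apply hAc
  exact lt_of_lt_of_le hypos (RemS_le_P t y)

lemma RemS_total_zero (hAc : ∀ x, 0 < P x → A x ≤ c) {t : ℕ}
    (ht : (∑ x : Fin N, P x) ≤ t) (x : Fin N) : RemS A c P t x = 0 := by
  have key : ∀ u : ℕ, (∑ x : Fin N, RemS A c P u x) + u ≤ (∑ x : Fin N, P x)
      ∨ (∑ x : Fin N, RemS A c P u x) = 0 := by
    intro u
    induction u with
    | zero => left; simp [RemS]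
    | succ u ih =>
      by_cases hz : (∑ x : Fin N, RemS A c P u x) = 0
      · right
        apply Finset.sum_eq_zero
        intro x _
        have hx0 : RemS A c P u x = 0 :=
          Nat.eq_zero_of_le_zero (le_of_le_of_eq
            (Finset.single_le_sum (fun y _ => Nat.zero_le _) (mem_univ x)) hz)
        have := RemS_succ_le (A := A) (c := c) (P := P) u x
        omega
      · -- some job is alive, so something runs and total remaining strictly drops
        have hpos : ∃ x₀, 0 < RemS A c P u x₀ := by
          by_contra hno
          push_neg at hno
          exact hz (Finset.sum_eq_zero fun x _ => Nat.eq_zero_of_le_zero (hno x))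
        obtain ⟨x₀, hx₀⟩ := hpos
        obtain ⟨y, hy⟩ := exists_runs hAc hx₀
        have hsum : (∑ x : Fin N, RemS A c P (u+1) x)
            + (∑ x : Fin N, (if runsP A c (RemS A c P u) x then 1 else 0))
            = ∑ x : Fin N, RemS A c P u x := by
          rw [← Finset.sum_add_distrib]
          exact Finset.sum_congr rfl fun x _ => RemS_succ_add u x
        have hone : 1 ≤ ∑ x : Fin N, (if runsP A c (RemS A c P u) x then 1 else 0) := by
          have h1 : (if runsP A c (RemS A c P u) y then 1 else 0) = 1 := if_pos hy
          have h2 : (if runsP A c (RemS A c P u) y then 1 else 0)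
              ≤ ∑ x : Fin N, (if runsP A c (RemS A c P u) x then 1 else 0) := by
            simpa using Finset.single_le_sum
              (f := fun x => if runsP A c (RemS A c P u) x then 1 else 0)
              (fun x _ => Nat.zero_le _) (mem_univ y)
          omega
        have hdec : (∑ x : Fin N, RemS A c P (u+1) x) + 1
            ≤ ∑ x : Fin N, RemS A c P u x := by
          rw [← hsum]
          exact Nat.add_le_add_left hone _
        rcases ih with ih | ih
        · left; omega
        · exact absurd ih hz
  rcases key t with h | h
  · have : (∑ x : Fin N, RemS A c P t x) = 0 := by omega
    exact Nat.eq_zero_of_le_zero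
      (le_of_le_of_eq (Finset.single_le_sum (fun y _ => Nat.zero_le _) (mem_univ x)) this)
  · exact Nat.eq_zero_of_le_zero
      (le_of_le_of_eq (Finset.single_le_sum (fun y _ => Nat.zero_le _) (mem_univ x)) h)

/-- Total volume processed (by tasks of index `< j`) over any set of slots is at most
the total volume of those tasks. -/
lemma load_budget (hA : ∀ x, 0 ≤ A x) (Mt : ℕ) (j : Fin N) :
    ∑ s ∈ Finset.range Mt, loadA A c (RemS A c P s) j.1
      ≤ ∑ u ∈ univ.filter (fun u : Fin N => u.1 < j.1), A u * (P u : ℝ) := by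
  have h1 : ∀ s, loadA A c (RemS A c P s) j.1
      = ∑ u ∈ univ.filter (fun u : Fin N => u.1 < j.1),
          (if runsP A c (RemS A c P s) u then A u else 0) := by
    intro s
    rw [loadA_eq_sum, Finset.sum_filter, Finset.sum_filter]
    apply Finset.sum_congr rfl
    intro x _
    by_cases hx : x.1 < j.1 <;> by_cases hrx : runsP A c (RemS A c P s) x <;>
      simp [hx, hrx]
  calc ∑ s ∈ Finset.range Mt, loadA A c (RemS A c P s) j.1
      = ∑ u ∈ univ.filter (fun u : Fin N => u.1 < j.1),
          ∑ s ∈ Finset.range Mt, (if runsP A c (RemS A c P s) u then A u else 0) := by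
        rw [Finset.sum_comm]
        exact Finset.sum_congr rfl fun s _ => h1 s
    _ ≤ _ := by
        apply Finset.sum_le_sum
        intro u _
        have : ∑ s ∈ Finset.range Mt, (if runsP A c (RemS A c P s) u then A u else 0)
            = A u * ∑ s ∈ Finset.range Mt,
                (if runsP A c (RemS A c P s) u then (1:ℝ) else 0) := by
          rw [Finset.mul_sum]
          exact Finset.sum_congr rfl fun s _ => by split <;> simp
        rw [this]
        apply mul_le_mul_of_nonneg_left _ (hA u)
        have hcast : ∑ s ∈ Finset.range Mt, (if runsP A c (RemS A c P s) u then (1:ℝ) else 0)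
            = ((∑ s ∈ Finset.range Mt, (if runsP A c (RemS A c P s) u then 1 else 0) : ℕ) : ℝ) := by
          push_cast
          exact Finset.sum_congr rfl fun s _ => by split <;> simp
        rw [hcast]
        exact_mod_cast count_le Mt u

/-- Queyranne-style consequence of the LP ordering constraints:
if `v k + ∑_{u ∈ S, u ≠ k} v u δ u k ≤ D` for every `k ∈ S`, with `δ u k + δ k u = 1`,
then the total volume of `S` is at most `2 D`. -/
lemma quad_volume (S : Finset (Fin N)) (v : Fin N → ℝ) (δ : Fin N → Fin N → ℝ)
    (hv : ∀ u, 0 ≤ v u)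
    (hδ1 : ∀ u k : Fin N, u ≠ k → δ u k + δ k u = 1)
    (D : ℝ) (hD : 0 ≤ D)
    (hcon : ∀ k ∈ S, v k + ∑ u ∈ S.erase k, v u * δ u k ≤ D) :
    ∑ u ∈ S, v u ≤ 2 * D := by
  set V := ∑ u ∈ S, v u with hV
  have hV0 : 0 ≤ V := Finset.sum_nonneg fun u _ => hv u
  -- main quadratic inequality
  have h1 : ∑ k ∈ S, v k * (v k + ∑ u ∈ S.erase k, v u * δ u k) ≤ V * D := by
    calc ∑ k ∈ S, v k * (v k + ∑ u ∈ S.erase k, v u * δ u k)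
        ≤ ∑ k ∈ S, v k * D :=
          Finset.sum_le_sum fun k hk =>
            mul_le_mul_of_nonneg_left (hcon k hk) (hv k)
      _ = V * D := by rw [← Finset.sum_mul]
  -- rewrite the cross terms
  have herase : ∀ (g : Fin N → Fin N → ℝ) (k : Fin N),
      ∑ u ∈ S.erase k, g u k = ∑ u ∈ S, (if u ≠ k then g u k else 0) := by
    intro g k
    rw [← Finset.sum_filter]
    congr 1
    exact (Finset.filter_ne' S k).symm ▸ rfl
  set Q := ∑ k ∈ S, ∑ u ∈ S.erase k, v k * (v u * δ u k) with hQ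
  have hLHS : ∑ k ∈ S, v k * (v k + ∑ u ∈ S.erase k, v u * δ u k)
      = (∑ k ∈ S, v k * v k) + Q := by
    rw [hQ, ← Finset.sum_add_distrib]
    apply Finset.sum_congr rfl
    intro k _
    rw [mul_add, Finset.mul_sum]
  -- symmetrization
  have hQ2 : Q + Q = ∑ k ∈ S, ∑ u ∈ S, (if u ≠ k then v k * v u else 0) := by
    have hQ' : Q = ∑ k ∈ S, ∑ u ∈ S, (if u ≠ k then v k * (v u * δ u k) else 0) := by
      rw [hQ]
      exact Finset.sum_congr rfl fun k _ => herase (fun u k => v k * (v u * δ u k)) k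
    have hswap : Q = ∑ k ∈ S, ∑ u ∈ S, (if u ≠ k then v u * (v k * δ k u) else 0) := by
      rw [hQ']
      rw [Finset.sum_comm]
      apply Finset.sum_congr rfl
      intro k _
      apply Finset.sum_congr rfl
      intro u _
      by_cases h : u ≠ k
      · rw [if_pos h, if_pos (Ne.symm h)]
      · rw [if_neg h, if_neg (fun h' => h (Ne.symm h'))]
    nth_rewrite 1 [hQ']
    nth_rewrite 1 [hswap]
    rw [← Finset.sum_add_distrib]
    apply Finset.sum_congr rfl
    intro k _
    rw [← Finset.sum_add_distrib]
    apply Finset.sum_congr rfl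
    intro u _
    by_cases h : u ≠ k
    · rw [if_pos h, if_pos h, if_pos h]
      have hd : δ u k = 1 - δ k u := by linarith [hδ1 u k h]
      rw [hd]; ring
    · rw [if_neg h, if_neg h, if_neg h, add_zero]
  have hP2 : ∑ k ∈ S, ∑ u ∈ S, (if u ≠ k then v k * v u else 0)
      = V * V - ∑ k ∈ S, v k * v k := by
    have : ∀ k ∈ S, ∑ u ∈ S, (if u ≠ k then v k * v u else 0)
        = v k * V - v k * v k := by
      intro k hk
      rw [← herase (fun u k => v k * v u) k]
      have h2 : ∑ u ∈ S.erase k, v k * v u = v k * ∑ u ∈ S.erase k, v u := by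
        rw [Finset.mul_sum]
      rw [h2, Finset.sum_erase_eq_sub hk, mul_sub]
    rw [Finset.sum_congr rfl this, Finset.sum_sub_distrib, ← Finset.sum_mul, ← hV]
  -- conclude V^2 ≤ 2 D V
  have hsq : ∑ k ∈ S, v k * v k ≥ 0 := Finset.sum_nonneg fun k _ => mul_self_nonneg _
  have hmain : V * V ≤ 2 * D * V := by nlinarith [h1, hLHS, hQ2, hP2, hsq]
  rcases eq_or_lt_of_le hV0 with h | h
  · rw [← h]; positivity
  · exact le_of_mul_le_mul_right (by nlinarith [hmain]) h

/-- Main bound: in the greedy schedule, any slot in which task `j` runs is at most `4 * Ctil j`. -/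
theorem main_bound (Ctil : Fin N → ℝ)
    (hc : 0 < c)
    (hA0 : ∀ x, 0 ≤ A x)
    (hApos : ∀ x, 0 < P x → 0 < A x)
    (hAc : ∀ x, 0 < P x → A x ≤ c)
    (hPC : ∀ x, 0 < P x → (P x : ℝ) ≤ Ctil x)
    (hsort : ∀ x y : Fin N, x ≤ y → Ctil x ≤ Ctil y)
    (t₀ : ℕ) (j : Fin N)
    (hpre : (∑ u ∈ univ.filter (fun u : Fin N => u.1 < j.1), A u * (P u : ℝ))
        + A j * (P j : ℝ) ≤ 2 * c * Ctil j)
    (hrun : runsP A c (RemS A c P t₀) j) :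
    (t₀ : ℝ) + 1 ≤ 4 * Ctil j := by
  have hPj : 0 < P j := lt_of_lt_of_le hrun.1 (RemS_le_P t₀ j)
  have hAj0 : 0 < A j := hApos j hPj
  have hAjc : A j ≤ c := hAc j hPj
  have hPCj : (P j : ℝ) ≤ Ctil j := hPC j hPj
  have hPj1 : (1 : ℝ) ≤ (P j : ℝ) := by exact_mod_cast hPj
  have hCj0 : 0 < Ctil j := by linarith
  have halive : ∀ s, s ≤ t₀ → 0 < RemS A c P s j :=
    fun s hs => lt_of_lt_of_le hrun.1 (RemS_antitone hs j)
  set B : Finset ℕ :=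
    (Finset.range t₀).filter (fun s => ¬ runsP A c (RemS A c P s) j) with hB
  -- counting: t₀ + 1 ≤ P j + B.card
  have hcountN : t₀ + 1 ≤ P j + B.card := by
    have hsplit :
        ((Finset.range t₀).filter (fun s => runsP A c (RemS A c P s) j)).card + B.card
          = t₀ := by
      rw [hB, Finset.card_filter_add_card_filter_not, Finset.card_range]
    have h1 : ∑ s ∈ Finset.range (t₀+1), (if runsP A c (RemS A c P s) j then 1 else 0)
        ≤ P j := count_le _ j
    rw [Finset.sum_range_succ, if_pos hrun] at h1
    have h2 : ((Finset.range t₀).filter (fun s => runsP A c (RemS A c P s) j)).card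
        = ∑ s ∈ Finset.range t₀, (if runsP A c (RemS A c P s) j then 1 else 0) :=
      Finset.card_filter _ _
    omega
  have hcountR : (t₀ : ℝ) + 1 ≤ (P j : ℝ) + (B.card : ℝ) := by exact_mod_cast hcountN
  -- blocked slots have high load
  have hblock : ∀ s ∈ B, c < loadA A c (RemS A c P s) j.1 + A j := by
    intro s hs
    rw [hB, mem_filter, Finset.mem_range] at hs
    by_contra hle
    push_neg at hle
    exact hs.2 ⟨halive s (le_of_lt hs.1), hle⟩
  -- volume budget over blocked slots
  have hbudget : ∑ s ∈ B, loadA A c (RemS A c P s) j.1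
      ≤ ∑ u ∈ univ.filter (fun u : Fin N => u.1 < j.1), A u * (P u : ℝ) := by
    calc ∑ s ∈ B, loadA A c (RemS A c P s) j.1
        ≤ ∑ s ∈ Finset.range t₀, loadA A c (RemS A c P s) j.1 := by
          apply Finset.sum_le_sum_of_subset_of_nonneg
          · rw [hB]; exact Finset.filter_subset _ _
          · intro s _ _; exact loadA_nonneg hA0 _
      _ ≤ _ := load_budget hA0 t₀ j
  have hVB : ∑ s ∈ B, loadA A c (RemS A c P s) j.1
      ≤ 2 * c * Ctil j - A j * (P j : ℝ) := by linarith
  by_cases hbig : 2 * A j ≤ c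
  · -- small task: every blocked slot has load > c - A j ≥ c/2
    have hden : 0 < c - A j := by linarith
    have hcard : (B.card : ℝ) * (c - A j) ≤ ∑ s ∈ B, loadA A c (RemS A c P s) j.1 := by
      have := Finset.card_nsmul_le_sum B (fun s => loadA A c (RemS A c P s) j.1)
        (c - A j) (fun s hs => by linarith [hblock s hs])
      simpa [nsmul_eq_mul] using this
    have hBC : (B.card : ℝ) * (c - A j) ≤ 2 * c * Ctil j - A j * (P j : ℝ) := by linarith
    have hm : 0 ≤ (2 * Ctil j - (P j : ℝ)) * (c - 2 * A j) :=
      mul_nonneg (by linarith) (by linarith)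
    have hfin : ((t₀ : ℝ) + 1) * (c - A j) ≤ (4 * Ctil j) * (c - A j) := by
      nlinarith [mul_le_mul_of_nonneg_right hcountR hden.le]
    exact le_of_mul_le_mul_right hfin hden
  · -- big task
    push_neg at hbig
    set C2 : Finset ℕ :=
      B.filter (fun s => loadA A c (RemS A c P s) j.1 ≤ c / 2) with hC2def
    by_cases hC2 : C2.Nonempty
    · -- there are low-load blocked slots
      set tstar := C2.max' hC2 with htsdef
      have htstar : tstar ∈ C2 := Finset.max'_mem _ _
      have hmax : ∀ s ∈ C2, s ≤ tstar := fun s hs => Finset.le_max' _ s hs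
      have htsB : tstar ∈ B := Finset.mem_of_mem_filter _ htstar
      set lam := loadA A c (RemS A c P tstar) j.1 with hlamdef
      have hlam2 : 2 * lam ≤ c := by
        have := (Finset.mem_filter.mp htstar).2
        linarith
      have hlamA : c - A j < lam := by linarith [hblock tstar htsB]
      have hlam0 : 0 < lam := by linarith
      set W : Finset (Fin N) :=
        univ.filter (fun u : Fin N => u.1 < j.1 ∧ runsP A c (RemS A c P tstar) u)
        with hWdef
      have hlamW : lam = ∑ u ∈ W, A u := loadA_eq_sum j.1
      have hWne : W.Nonempty := by
        by_contra hemp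
        rw [Finset.not_nonempty_iff_eq_empty] at hemp
        rw [hlamW, hemp, Finset.sum_empty] at hlam0
        exact lt_irrefl _ hlam0
      obtain ⟨ustar, hustar⟩ := hWne
      have hustar' : ustar.1 < j.1 ∧ runsP A c (RemS A c P tstar) ustar := by
        have := Finset.mem_filter.mp hustar
        exact this.2
      have hult : ustar.1 < j.1 := hustar'.1
      have hulej : ustar ≤ j := le_of_lt (by exact hult)
      have hastar_le : A ustar ≤ lam := by
        rw [hlamW]
        exact Finset.single_le_sum (fun u _ => hA0 u) hustar
      have hastar0 : 0 < A ustar :=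
        hApos _ (lt_of_lt_of_le hustar'.2.1 (RemS_le_P _ _))
      have huP : 0 < P ustar := lt_of_lt_of_le hustar'.2.1 (RemS_le_P _ _)
      have hKC : (P ustar : ℝ) ≤ Ctil j := (hPC _ huP).trans (hsort ustar j hulej)
      -- u* runs whenever alive and the load is at most c - A u*
      have hurunall : ∀ s, s ≤ tstar → loadA A c (RemS A c P s) j.1 ≤ c - A ustar →
          runsP A c (RemS A c P s) ustar := by
        intro s hs hload
        refine ⟨lt_of_lt_of_le hustar'.2.1 (RemS_antitone hs ustar), ?_⟩
        have hmono : loadA A c (RemS A c P s) ustar.1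
            ≤ loadA A c (RemS A c P s) j.1 := loadA_mono hA0 (le_of_lt hult)
        linarith
      set cheap : Finset ℕ :=
        B.filter (fun s => s ≤ tstar ∧ loadA A c (RemS A c P s) j.1 ≤ c - A ustar)
        with hcheapdef
      set expS : Finset ℕ :=
        B.filter (fun s => ¬(s ≤ tstar ∧ loadA A c (RemS A c P s) j.1 ≤ c - A ustar))
        with hexpdef
      have hcards : cheap.card + expS.card = B.card := by
        rw [hcheapdef, hexpdef, Finset.card_filter_add_card_filter_not]
      -- (i) cheap slots are slots where u* runs
      have hcheapcard : cheap.card ≤ P ustar := by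
        have hsub : cheap ⊆ (Finset.range (t₀+1)).filter
            (fun s => runsP A c (RemS A c P s) ustar) := by
          intro s hs
          rw [hcheapdef, Finset.mem_filter] at hs
          obtain ⟨hsB, hs1, hs2⟩ := hs
          have hsr : s < t₀ := by
            have := (Finset.mem_filter.mp (hB ▸ hsB)).1
            exact Finset.mem_range.mp this
          rw [Finset.mem_filter]
          exact ⟨Finset.mem_range.mpr (Nat.lt_succ_of_lt hsr), hurunall s hs1 hs2⟩
        calc cheap.card ≤ _ := Finset.card_le_card hsub
          _ = ∑ s ∈ Finset.range (t₀+1),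
              (if runsP A c (RemS A c P s) ustar then 1 else 0) := Finset.card_filter _ _
          _ ≤ P ustar := count_le _ _
      -- (ii) every cheap slot has load at least lam
      have hcheaplow : ∀ s ∈ cheap, lam ≤ loadA A c (RemS A c P s) j.1 := by
        intro s hs
        rw [hcheapdef, Finset.mem_filter] at hs
        obtain ⟨hsB, hs1, hs2⟩ := hs
        by_cases hhalf : loadA A c (RemS A c P s) j.1 ≤ c / 2
        · -- all tasks in W run at slot s
          have hWrun : ∀ u ∈ W, runsP A c (RemS A c P s) u := by
            intro u hu
            have hu' : u.1 < j.1 ∧ runsP A c (RemS A c P tstar) u :=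
              (Finset.mem_filter.mp hu).2
            refine ⟨lt_of_lt_of_le hu'.2.1 (RemS_antitone hs1 u), ?_⟩
            have hAu : A u ≤ lam := by
              rw [hlamW]
              exact Finset.single_le_sum (fun x _ => hA0 x) hu
            have hmono : loadA A c (RemS A c P s) u.1
                ≤ loadA A c (RemS A c P s) j.1 := loadA_mono hA0 (le_of_lt hu'.1)
            linarith
          have hLds : loadA A c (RemS A c P s) j.1
              = ∑ u ∈ univ.filter
                  (fun u : Fin N => u.1 < j.1 ∧ runsP A c (RemS A c P s) u), A u :=
            loadA_eq_sum j.1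
          have hsub : W ⊆ univ.filter
              (fun u : Fin N => u.1 < j.1 ∧ runsP A c (RemS A c P s) u) := by
            intro u hu
            have hu' := (Finset.mem_filter.mp hu).2
            rw [Finset.mem_filter]
            exact ⟨mem_univ u, hu'.1, hWrun u hu⟩
          rw [hlamW, hLds]
          exact Finset.sum_le_sum_of_subset_of_nonneg hsub (fun u _ _ => hA0 u)
        · linarith
      -- (iii) every expensive slot has load at least c - lam
      have hexplow : ∀ s ∈ expS, c - lam ≤ loadA A c (RemS A c P s) j.1 := by
        intro s hs
        rw [hexpdef, Finset.mem_filter] at hs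
        obtain ⟨hsB, hnot⟩ := hs
        by_cases hstar : s ≤ tstar
        · have h1 : ¬ loadA A c (RemS A c P s) j.1 ≤ c - A ustar :=
            fun h => hnot ⟨hstar, h⟩
          push_neg at h1
          linarith
        · push_neg at hstar
          have hgt : c / 2 < loadA A c (RemS A c P s) j.1 := by
            by_contra hle
            push_neg at hle
            have hsC2 : s ∈ C2 := by
              rw [hC2def, Finset.mem_filter]; exact ⟨hsB, hle⟩
            exact absurd (hmax s hsC2) (not_le.mpr hstar)
          have hLds : loadA A c (RemS A c P s) j.1
              = ∑ u ∈ univ.filter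
                  (fun u : Fin N => u.1 < j.1 ∧ runsP A c (RemS A c P s) u), A u :=
            loadA_eq_sum j.1
          have hnotsub : ¬ (univ.filter
              (fun u : Fin N => u.1 < j.1 ∧ runsP A c (RemS A c P s) u)) ⊆ W := by
            intro hsub
            have : loadA A c (RemS A c P s) j.1 ≤ lam := by
              rw [hLds, hlamW]
              exact Finset.sum_le_sum_of_subset_of_nonneg hsub (fun u _ _ => hA0 u)
            linarith
          obtain ⟨u, huRs, huW⟩ := Finset.not_subset.mp hnotsub
          have hu' : u.1 < j.1 ∧ runsP A c (RemS A c P s) u :=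
            (Finset.mem_filter.mp huRs).2
          have hualive : 0 < RemS A c P tstar u :=
            lt_of_lt_of_le hu'.2.1 (RemS_antitone (le_of_lt hstar) u)
          have hunotrun : ¬ runsP A c (RemS A c P tstar) u := by
            intro h
            exact huW (by rw [hWdef, Finset.mem_filter]; exact ⟨mem_univ u, hu'.1, h⟩)
          have hublocked : c < loadA A c (RemS A c P tstar) u.1 + A u := by
            by_contra hle
            push_neg at hle
            exact hunotrun ⟨hualive, hle⟩
          have hmono : loadA A c (RemS A c P tstar) u.1 ≤ lam :=
            loadA_mono hA0 (le_of_lt hu'.1)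
          have hAu : A u ≤ loadA A c (RemS A c P s) j.1 := by
            rw [hLds]
            exact Finset.single_le_sum (fun x _ => hA0 x) huRs
          linarith
      -- budget split
      have hsplitsum : ∑ s ∈ cheap, loadA A c (RemS A c P s) j.1
          + ∑ s ∈ expS, loadA A c (RemS A c P s) j.1
          = ∑ s ∈ B, loadA A c (RemS A c P s) j.1 := by
        rw [hcheapdef, hexpdef]
        exact Finset.sum_filter_add_sum_filter_not _ _ _
      have hcheapsum : (cheap.card : ℝ) * lam
          ≤ ∑ s ∈ cheap, loadA A c (RemS A c P s) j.1 := by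
        have := Finset.card_nsmul_le_sum cheap
          (fun s => loadA A c (RemS A c P s) j.1) lam hcheaplow
        simpa [nsmul_eq_mul] using this
      have hexpsum : (expS.card : ℝ) * (c - lam)
          ≤ ∑ s ∈ expS, loadA A c (RemS A c P s) j.1 := by
        have := Finset.card_nsmul_le_sum expS
          (fun s => loadA A c (RemS A c P s) j.1) (c - lam) hexplow
        simpa [nsmul_eq_mul] using this
      -- final algebra
      have hclam : 0 < c - lam := by linarith
      have hncC : (cheap.card : ℝ) ≤ Ctil j := by
        calc (cheap.card : ℝ) ≤ (P ustar : ℝ) := by exact_mod_cast hcheapcard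
          _ ≤ Ctil j := hKC
      have hTcount : (t₀ : ℝ) + 1 ≤ (P j : ℝ) + (cheap.card : ℝ) + (expS.card : ℝ) := by
        have : (B.card : ℝ) = (cheap.card : ℝ) + (expS.card : ℝ) := by
          exact_mod_cast hcards.symm
        linarith
      have hbig2 : lam * (cheap.card : ℝ) + (c - lam) * (expS.card : ℝ)
          ≤ 2 * c * Ctil j - A j * (P j : ℝ) := by
        nlinarith [hcheapsum, hexpsum, hsplitsum, hVB]
      have e5 : (c - 2 * lam) * (cheap.card : ℝ) ≤ (c - 2 * lam) * Ctil j :=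
        mul_le_mul_of_nonneg_left hncC (by linarith)
      have e6 : 0 ≤ (lam + A j - c) * (P j : ℝ) :=
        mul_nonneg (by linarith) (by positivity)
      have e7 : 0 ≤ (c - 2 * lam) * Ctil j := mul_nonneg (by linarith) (by linarith)
      have hfin : (c - lam) * ((t₀ : ℝ) + 1) ≤ (c - lam) * (4 * Ctil j) := by
        nlinarith [mul_le_mul_of_nonneg_left hTcount hclam.le, hbig2, e5, e6, e7]
      exact le_of_mul_le_mul_left hfin hclam
    · -- no low-load blocked slots: every blocked slot has load > c/2
      have hhigh : ∀ s ∈ B, c / 2 < loadA A c (RemS A c P s) j.1 := by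
        intro s hs
        by_contra hle
        push_neg at hle
        exact hC2 ⟨s, by rw [hC2def, Finset.mem_filter]; exact ⟨hs, hle⟩⟩
      have hcard : (B.card : ℝ) * (c / 2) ≤ ∑ s ∈ B, loadA A c (RemS A c P s) j.1 := by
        have := Finset.card_nsmul_le_sum B
          (fun s => loadA A c (RemS A c P s) j.1) (c / 2)
          (fun s hs => le_of_lt (hhigh s hs))
        simpa [nsmul_eq_mul] using this
      have hPc : (P j : ℝ) * (c - 2 * A j) ≤ 0 :=
        mul_nonpos_of_nonneg_of_nonpos (by positivity) (by linarith)
      have hfin : c * ((t₀ : ℝ) + 1) ≤ c * (4 * Ctil j) := by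
        nlinarith [mul_le_mul_of_nonneg_left hcountR hc.le, hcard, hVB, hPc]
      exact le_of_mul_le_mul_left hfin hc

end SP3

open SP3

/-- Main guarantee for SynchPack-3 (single-machine placement, preemption allowed): given any
feasible (LP3) solution with jobs indexed in nondecreasing order of `C̃_j`, there is a valid
preemptive schedule (each task on its designated machine) whose job completion times satisfy
`C_j ≤ 4·C̃_j` for every job; in particular `Σ_j w_j C_j ≤ 4 Σ_j w_j C̃_j`. -/
theorem synchpack3_four_approx
    (M N : ℕ)
    (cap : Fin M → ℝ) (hcap : ∀ i, 0 < cap i)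
    (w : Fin N → ℝ) (hw : ∀ j, 0 < w j)
    (Mset : Fin N → Finset (Fin M))
    (a : Fin N → Fin M → ℝ)
    (p : Fin N → Fin M → ℕ)
    (ha : ∀ j, ∀ i ∈ Mset j, 0 < a j i ∧ a j i ≤ cap i)
    (hp : ∀ j, ∀ i ∈ Mset j, 1 ≤ p j i)
    -- a feasible solution (C̃, δ) of (LP3), with jobs sorted so that C̃ is nondecreasing
    (Ctil : Fin N → ℝ)
    (hsorted : ∀ j j' : Fin N, j ≤ j' → Ctil j ≤ Ctil j')
    (δ : Fin N → Fin N → ℝ)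
    (hδnn : ∀ j j', 0 ≤ δ j j')
    (hδsum : ∀ j j' : Fin N, j ≠ j' → δ j j' + δ j' j = 1)
    (hvol : ∀ j, ∀ i ∈ Mset j,
      a j i * (p j i : ℝ) + ∑ j' ∈ Finset.univ.filter (fun j' => j' ≠ j ∧ i ∈ Mset j'),
        a j' i * (p j' i : ℝ) * δ j' j ≤ cap i * Ctil j)
    (hproc : ∀ j, ∀ i ∈ Mset j, (p j i : ℝ) ≤ Ctil j) :
    -- a valid preemptive schedule over integer time slots, completing each job by 4·C̃_j
    ∃ (H : ℕ) (X : Fin N → Fin M → ℕ → ℝ) (C : Fin N → ℝ),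
      (∀ j i t, X j i t = 0 ∨ X j i t = 1) ∧
      (∀ j i t, X j i t = 1 → i ∈ Mset j ∧ 1 ≤ t ∧ t ≤ H) ∧
      (∀ i t, ∑ j, a j i * X j i t ≤ cap i) ∧
      (∀ j, ∀ i ∈ Mset j, ∑ t ∈ Finset.Icc 1 H, X j i t = (p j i : ℝ)) ∧
      (∀ j i t, X j i t = 1 → (t : ℝ) ≤ C j) ∧
      (∀ j, C j ≤ 4 * Ctil j) ∧
      ∑ j, w j * C j ≤ 4 * ∑ j, w j * Ctil j := by
  classical
  set Af : Fin M → Fin N → ℝ := fun i x => if i ∈ Mset x then a x i else 0 with hAf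
  set Pf : Fin M → Fin N → ℕ := fun i x => if i ∈ Mset x then p x i else 0 with hPf
  set H : ℕ := ∑ x : Fin N, ∑ i : Fin M, p x i with hH
  set X : Fin N → Fin M → ℕ → ℝ := fun j i t =>
    if 1 ≤ t ∧ runsP (Af i) (cap i) (RemS (Af i) (cap i) (Pf i) (t - 1)) j
    then 1 else 0 with hX
  -- basic per-machine facts
  have hA0 : ∀ i x, 0 ≤ Af i x := by
    intro i x
    by_cases h : i ∈ Mset x
    · simp only [hAf, if_pos h]; exact (ha x i h).1.le
    · simp only [hAf, if_neg h]; exact le_refl 0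
  have hMofP : ∀ i x, 0 < Pf i x → i ∈ Mset x := by
    intro i x hx
    by_contra h
    simp only [hPf, if_neg h] at hx
    exact lt_irrefl 0 hx
  have hApos : ∀ i x, 0 < Pf i x → 0 < Af i x := by
    intro i x hx
    have h := hMofP i x hx
    simp only [hAf, if_pos h]
    exact (ha x i h).1
  have hAc : ∀ i x, 0 < Pf i x → Af i x ≤ cap i := by
    intro i x hx
    have h := hMofP i x hx
    simp only [hAf, if_pos h]
    exact (ha x i h).2
  have hPC : ∀ i x, 0 < Pf i x → (Pf i x : ℝ) ≤ Ctil x := by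
    intro i x hx
    have h := hMofP i x hx
    simp only [hPf, if_pos h]
    exact hproc x i h
  have hHi : ∀ i, (∑ x : Fin N, Pf i x) ≤ H := by
    intro i
    rw [hH]
    apply Finset.sum_le_sum
    intro x _
    have h1 : Pf i x ≤ p x i := by
      by_cases h : i ∈ Mset x
      · simp [hPf, h]
      · simp [hPf, h]
    exact h1.trans (Finset.single_le_sum (f := fun i' => p x i')
      (fun i' _ => Nat.zero_le _) (mem_univ i))
  have hzero : ∀ i t, H ≤ t → ∀ x, RemS (Af i) (cap i) (Pf i) t x = 0 := by
    intro i t ht x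
    exact RemS_total_zero (hAc i) (le_trans (hHi i) ht) x
  -- prefix volume bound from the LP constraints
  have hpre : ∀ i, ∀ j : Fin N, i ∈ Mset j →
      (∑ u ∈ univ.filter (fun u : Fin N => u.1 < j.1), Af i u * (Pf i u : ℝ))
        + Af i j * (Pf i j : ℝ) ≤ 2 * cap i * Ctil j := by
    intro i j hij
    have hCj0 : 0 < Ctil j := by
      have h1 : (1 : ℝ) ≤ (p j i : ℝ) := by exact_mod_cast hp j i hij
      linarith [hproc j i hij]
    -- rewrite as a sum over indices ≤ j
    have hsteq : (∑ u ∈ univ.filter (fun u : Fin N => u.1 < j.1), Af i u * (Pf i u : ℝ))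
        + Af i j * (Pf i j : ℝ)
        = ∑ u ∈ univ.filter (fun u : Fin N => u ≤ j), Af i u * (Pf i u : ℝ) := by
      have hins : univ.filter (fun u : Fin N => u ≤ j)
          = insert j (univ.filter (fun u : Fin N => u.1 < j.1)) := by
        ext u
        simp only [mem_filter, mem_univ, true_and, mem_insert]
        constructor
        · intro hu
          rcases lt_or_eq_of_le hu with h | h
          · exact Or.inr h
          · exact Or.inl h
        · rintro (rfl | hu)
          · exact le_refl _
          · exact le_of_lt hu
      rw [hins, Finset.sum_insert (by simp)]
      ring
    rw [hsteq]
    -- reduce to a sum over tasks on machine i with index ≤ j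
    set v : Fin N → ℝ := fun u => if i ∈ Mset u then a u i * (p u i : ℝ) else 0 with hv
    have hveq : ∀ u : Fin N, Af i u * (Pf i u : ℝ) = v u := by
      intro u
      by_cases h : i ∈ Mset u
      · simp [hAf, hPf, hv, h]
      · simp [hAf, hPf, hv, h]
    rw [Finset.sum_congr rfl (fun u _ => hveq u)]
    have hv0 : ∀ u, 0 ≤ v u := by
      intro u
      by_cases h : i ∈ Mset u
      · simp only [hv, if_pos h]
        exact mul_nonneg (ha u i h).1.le (Nat.cast_nonneg _)
      · simp [hv, h]
    -- the set S of tasks on machine i with index ≤ j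
    set S : Finset (Fin N) := univ.filter (fun u : Fin N => u ≤ j ∧ i ∈ Mset u) with hS
    have hredS : ∑ u ∈ univ.filter (fun u : Fin N => u ≤ j), v u = ∑ u ∈ S, v u := by
      rw [← Finset.sum_filter_add_sum_filter_not (univ.filter (fun u : Fin N => u ≤ j))
        (fun u => i ∈ Mset u) v]
      have hz : ∑ u ∈ (univ.filter (fun u : Fin N => u ≤ j)).filter
          (fun u => ¬ i ∈ Mset u), v u = 0 := by
        apply Finset.sum_eq_zero
        intro u hu
        have hu' := (Finset.mem_filter.mp hu).2
        simp [hv, hu']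
      rw [hz, add_zero]
      congr 1
      rw [hS, Finset.filter_filter]
    rw [hredS]
    have hquad := quad_volume S v δ hv0 hδsum (cap i * Ctil j)
      (mul_nonneg (hcap i).le hCj0.le) ?_
    · calc ∑ u ∈ S, v u ≤ 2 * (cap i * Ctil j) := hquad
        _ = 2 * cap i * Ctil j := by ring
    · -- the per-job constraint restricted to S
      intro k hk
      have hk' := (Finset.mem_filter.mp hk).2
      have hkj : k ≤ j := hk'.1
      have hkM : i ∈ Mset k := hk'.2
      have hcon := hvol k i hkM
      have h1 : ∑ u ∈ S.erase k, v u * δ u k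
          ≤ ∑ u ∈ univ.filter (fun u : Fin N => u ≠ k ∧ i ∈ Mset u),
              a u i * (p u i : ℝ) * δ u k := by
        have hsub : S.erase k ⊆ univ.filter (fun u : Fin N => u ≠ k ∧ i ∈ Mset u) := by
          intro u hu
          rw [Finset.mem_erase] at hu
          have hu' := (Finset.mem_filter.mp hu.2).2
          rw [Finset.mem_filter]
          exact ⟨mem_univ u, hu.1, hu'.2⟩
        calc ∑ u ∈ S.erase k, v u * δ u k
            = ∑ u ∈ S.erase k, a u i * (p u i : ℝ) * δ u k := by
              apply Finset.sum_congr rfl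
              intro u hu
              rw [Finset.mem_erase] at hu
              have hu' := (Finset.mem_filter.mp hu.2).2
              simp [hv, hu'.2]
          _ ≤ _ := by
              apply Finset.sum_le_sum_of_subset_of_nonneg hsub
              intro u hu _
              have hu' := (Finset.mem_filter.mp hu).2.2
              exact mul_nonneg (mul_nonneg (ha u i hu').1.le (Nat.cast_nonneg _))
                (hδnn u k)
      have h2 : v k = a k i * (p k i : ℝ) := by simp [hv, hkM]
      have h3 : cap i * Ctil k ≤ cap i * Ctil j :=
        mul_le_mul_of_nonneg_left (hsorted k j hkj) (hcap i).le
      linarith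
  -- membership facts extracted from X = 1
  have hXone : ∀ j i t, X j i t = 1 →
      (1 ≤ t ∧ runsP (Af i) (cap i) (RemS (Af i) (cap i) (Pf i) (t - 1)) j) := by
    intro j i t h1
    by_contra hcond
    rw [hX] at h1
    simp only [if_neg hcond] at h1
    exact zero_ne_one h1
  have hXmem : ∀ j i t, X j i t = 1 → i ∈ Mset j ∧ 1 ≤ t ∧ t ≤ H := by
    intro j i t h1
    obtain ⟨ht1, hr⟩ := hXone j i t h1
    have hPpos : 0 < Pf i j :=
      lt_of_lt_of_le hr.1 (RemS_le_P (t - 1) j)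
    refine ⟨hMofP i j hPpos, ht1, ?_⟩
    by_contra htH
    push_neg at htH
    have h2 : H ≤ t - 1 := by omega
    have h3 := hzero i (t - 1) h2 j
    have hr1 := hr.1
    omega
  refine ⟨H, X, fun j => 4 * Ctil j, ?_, hXmem, ?_, ?_, ?_, ?_, ?_⟩
  · -- 0/1 values
    intro j i t
    rw [hX]
    by_cases h : 1 ≤ t ∧ runsP (Af i) (cap i) (RemS (Af i) (cap i) (Pf i) (t - 1)) j
    · right; simp [h]
    · left; simp [h]
  · -- capacity constraint
    intro i t
    by_cases ht : 1 ≤ t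
    · have hterm : ∀ j, a j i * X j i t =
          (if runsP (Af i) (cap i) (RemS (Af i) (cap i) (Pf i) (t - 1)) j
           then Af i j else 0) := by
        intro j
        by_cases hr : runsP (Af i) (cap i) (RemS (Af i) (cap i) (Pf i) (t - 1)) j
        · have hPpos : 0 < Pf i j := lt_of_lt_of_le hr.1 (RemS_le_P (t - 1) j)
          have hM : i ∈ Mset j := hMofP i j hPpos
          rw [hX]
          simp only [if_pos (And.intro ht hr), if_pos hr, mul_one]
          simp [hAf, hM]
        · rw [hX]
          simp [hr]
      rw [Finset.sum_congr rfl (fun j _ => hterm j)]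
      rw [sum_ite_runs]
      exact loadA_le (hcap i).le N
    · have hterm : ∀ j, a j i * X j i t = 0 := by
        intro j
        have hcond : ¬ (1 ≤ t ∧
            runsP (Af i) (cap i) (RemS (Af i) (cap i) (Pf i) (t - 1)) j) := by
          intro hco
          exact ht hco.1
        have hz : X j i t = 0 := by
          rw [hX]
          simp only [if_neg hcond]
        rw [hz, mul_zero]
      rw [Finset.sum_congr rfl (fun j _ => hterm j)]
      simp [(hcap i).le]
  · -- every task gets exactly its processing time
    intro j i hij
    have hPj : Pf i j = p j i := by simp [hPf, hij]
    have hIcc : ∑ t ∈ Finset.Icc 1 H, X j i t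
        = ∑ s ∈ Finset.range H, X j i (1 + s) := by
      rw [← Finset.Ico_add_one_right_eq_Icc, Finset.sum_Ico_eq_sum_range]
      simp
    rw [hIcc]
    have hXs : ∀ s, X j i (1 + s) =
        (if runsP (Af i) (cap i) (RemS (Af i) (cap i) (Pf i) s) j then (1:ℝ) else 0) := by
      intro s
      have h1 : 1 + s - 1 = s := by omega
      simp only [hX, h1]
      by_cases hr : runsP (Af i) (cap i) (RemS (Af i) (cap i) (Pf i) s) j
      · simp [hr]
      · simp [hr]
    rw [Finset.sum_congr rfl (fun s _ => hXs s)]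
    have hcast : ∑ s ∈ Finset.range H,
        (if runsP (Af i) (cap i) (RemS (Af i) (cap i) (Pf i) s) j then (1:ℝ) else 0)
        = ((∑ s ∈ Finset.range H,
            (if runsP (Af i) (cap i) (RemS (Af i) (cap i) (Pf i) s) j then 1 else 0) : ℕ) : ℝ) := by
      push_cast
      exact Finset.sum_congr rfl fun s _ => by split <;> simp
    rw [hcast]
    have hcount := rem_add_count (A := Af i) (c := cap i) (P := Pf i) H j
    have hzeroH : RemS (Af i) (cap i) (Pf i) H j = 0 := hzero i H (le_refl H) j
    rw [hzeroH, zero_add] at hcount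
    rw [hcount, hPj]
  · -- completion times
    intro j i t h1
    obtain ⟨ht1, hr⟩ := hXone j i t h1
    have hM : i ∈ Mset j := (hXmem j i t h1).1
    have hb := main_bound (A := Af i) (c := cap i) (P := Pf i) Ctil (hcap i)
      (hA0 i) (hApos i) (hAc i) (hPC i) hsorted (t - 1) j (hpre i j hM) hr
    have ht' : ((t - 1 : ℕ) : ℝ) + 1 = (t : ℝ) := by
      have h2 : t - 1 + 1 = t := by omega
      exact_mod_cast congrArg (Nat.cast : ℕ → ℝ) h2
    show (t : ℝ) ≤ 4 * Ctil j
    linarith [hb, ht'.le]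
  · -- C j ≤ 4 Ctil j
    intro j
    exact le_refl _
  · -- weighted sum
    apply le_of_eq
    rw [Finset.mul_sum]
    apply Finset.sum_congr rfl
    intro j _
    ring
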